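/- Let $f : (0,1) \to [0,\infty)$ be absolutely continuous, nondecreasing, with $f(1) \leq M$ for some $M > 0$, and suppose there are constants $C > 0$ and $\alpha > 1$ such that $f(t) \leq C (t f'(t))^{\alpha}$ for almost every $t \in (0,1)$. Then there exists $\delta > 0$, depending only on $C$, $\alpha$, and $M$, such that $f(t) = 0$ for all $t \in (0, \delta)$. In fact one may take $\delta = \exp(-\alpha\, C^{1/\alpha} M^{(\alpha-1)/\alpha}/(\alpha - 1))$ up to adjusting constants. -/

import Mathlib

/-!
Put `β = 1 - α⁻¹`. Where `f > 0`, the inequality `f ≤ C (t f')^α` implies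
`(f ^ β)' = β f' f ^ (-α⁻¹) ≥ β C ^ (-α⁻¹) / t`. If `f t₀ > 0`, monotonicity keeps `f` positive on
`[t₀, 1/2]`, and integrating gives `β C ^ (-α⁻¹) log (1 / (2 t₀)) ≤ f (1/2) ^ β ≤ M ^ β`, a lower
bound on `t₀`. Since `f'` is only controlled almost everywhere, the integration uses that the
derivative of a differentiable monotone function is integrable.
-/

open Set MeasureTheory Real intervalIntegral

theorem rpow_neg_inv_div_le_mul_rpow_neg_inv {C α x y d : ℝ} (hC : 0 < C) (hα : 0 < α)
    (hx : 0 < x) (hy : 0 < y) (hd : 0 ≤ d) (h : y ≤ C * (x * d) ^ α) :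
    C ^ (-α⁻¹) / x ≤ d * y ^ (-α⁻¹) := by
  have hroot : y ^ α⁻¹ ≤ C ^ α⁻¹ * (x * d) := by
    calc y ^ α⁻¹ ≤ (C * (x * d) ^ α) ^ α⁻¹ := by gcongr
      _ = C ^ α⁻¹ * (x * d) := by
        rw [mul_rpow hC.le (by positivity), ← rpow_mul (by positivity), mul_inv_cancel₀ hα.ne',
          rpow_one]
  have hCα : 0 < C ^ α⁻¹ := by positivity
  have hyα : 0 < y ^ α⁻¹ := by positivity
  rw [rpow_neg hC.le, rpow_neg hy.le, div_le_iff₀ hx, inv_le_iff_one_le_mul₀ hCα]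
  calc (1:ℝ) = y ^ α⁻¹ * (y ^ α⁻¹)⁻¹ := (mul_inv_cancel₀ hyα.ne').symm
    _ ≤ C ^ α⁻¹ * (x * d) * (y ^ α⁻¹)⁻¹ := by gcongr
    _ = d * (y ^ α⁻¹)⁻¹ * x * C ^ α⁻¹ := by ring

theorem integral_le_sub_of_hasDerivAt_of_ae_le {g g' φ : ℝ → ℝ} {a b : ℝ} (hab : a ≤ b)
    (hcont : ContinuousOn g (Icc a b)) (hderiv : ∀ x ∈ Ioo a b, HasDerivAt g (g' x) x)
    (hg' : ∀ x ∈ Ioo a b, 0 ≤ g' x) (hφ : IntervalIntegrable φ volume a b)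
    (hφg : ∀ᵐ x ∂volume.restrict (Ioc a b), φ x ≤ g' x) :
    ∫ x in a..b, φ x ≤ g b - g a := by
  have hint : IntervalIntegrable g' volume a b :=
    (intervalIntegrable_iff_integrableOn_Ioc_of_le hab).2
      (integrableOn_deriv_of_nonneg hcont hderiv hg')
  rw [← integral_eq_sub_of_hasDerivAt_of_le hab hcont hderiv hint, integral_of_le hab,
    integral_of_le hab]
  exact setIntegral_mono_ae_restrict hφ.1 hint.1 hφg

theorem mul_log_div_le_rpow_sub_rpow_of_le_mul_rpow {f f' : ℝ → ℝ} {C α a b : ℝ} (hC : 0 < C)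
    (hα : 1 < α) (ha : 0 < a) (hab : a ≤ b) (hpos : ∀ x ∈ Icc a b, 0 < f x)
    (hderiv : ∀ x ∈ Icc a b, HasDerivAt f (f' x) x) (hf' : ∀ x ∈ Icc a b, 0 ≤ f' x)
    (hineq : ∀ᵐ x ∂volume.restrict (Ioc a b), f x ≤ C * (x * f' x) ^ α) :
    (1 - α⁻¹) * C ^ (-α⁻¹) * log (b / a) ≤ f b ^ (1 - α⁻¹) - f a ^ (1 - α⁻¹) := by
  set β := 1 - α⁻¹
  have hβ : 0 < β := sub_pos.2 (inv_lt_one_of_one_lt₀ hα)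
  have hβ_sub_one : β - 1 = -α⁻¹ := by ring
  have hg : ∀ x ∈ Icc a b, HasDerivAt (fun x ↦ f x ^ β) (f' x * β * f x ^ (β - 1)) x :=
    fun x hx ↦ (hderiv x hx).rpow_const (Or.inl (hpos x hx).ne')
  have hxpos : ∀ x ∈ Icc a b, 0 < x := fun x hx ↦ ha.trans_le hx.1
  calc β * C ^ (-α⁻¹) * log (b / a) = ∫ x in a..b, β * C ^ (-α⁻¹) * x⁻¹ := by
        rw [intervalIntegral.integral_const_mul, integral_inv_of_pos ha (ha.trans_le hab)]
    _ ≤ f b ^ β - f a ^ β := by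
      refine integral_le_sub_of_hasDerivAt_of_ae_le hab
        (fun x hx ↦ (hg x hx).continuousAt.continuousWithinAt)
        (fun x hx ↦ hg x (Ioo_subset_Icc_self hx)) (fun x hx ↦ ?_) ?_ ?_
      · have hx' := Ioo_subset_Icc_self hx
        have := hpos x hx'
        have := hf' x hx'
        positivity
      · exact (continuousOn_const.mul (continuousOn_inv₀.mono fun x hx ↦
          (hxpos x (by rwa [uIcc_of_le hab] at hx)).ne')).intervalIntegrable
      · filter_upwards [hineq, ae_restrict_mem measurableSet_Ioc] with x hx hxI
        have hx' := Ioc_subset_Icc_self hxI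
        calc β * C ^ (-α⁻¹) * x⁻¹ = β * (C ^ (-α⁻¹) / x) := by ring
          _ ≤ β * (f' x * f x ^ (-α⁻¹)) := by
            gcongr
            exact rpow_neg_inv_div_le_mul_rpow_neg_inv hC (by linarith) (hxpos x hx')
              (hpos x hx') (hf' x hx') hx
          _ = f' x * β * f x ^ (β - 1) := by rw [hβ_sub_one]; ring

theorem lt_mul_log_div_of_lt_mul_exp {K c t b : ℝ} (hc : 0 < c) (ht : 0 < t)
    (htb : t < b * exp (-(K / c))) : K < c * log (b / t) := by
  have hexp : exp (K / c) < b / t := by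
    rw [lt_div_iff₀ ht]
    calc exp (K / c) * t < exp (K / c) * (b * exp (-(K / c))) := by gcongr
      _ = b := by rw [mul_left_comm, ← exp_add, add_neg_cancel, exp_zero, mul_one]
  have hb : 0 < b := (mul_pos_iff_of_pos_right (exp_pos _)).1 (ht.trans htb)
  have := (lt_log_iff_exp_lt (div_pos hb ht)).2 hexp
  rwa [div_lt_iff₀' hc] at this

theorem vanishing_near_zero_of_differential_inequality_general
    (C α M : ℝ) (hC : 0 < C) (hα : 1 < α) :
    ∃ δ > 0, ∀ f f' : ℝ → ℝ,
      (∀ t ∈ Ioo (0:ℝ) 1, 0 ≤ f t) →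
      MonotoneOn f (Ioo (0:ℝ) 1) →
      (∀ t ∈ Ioo (0:ℝ) 1, HasDerivAt f (f' t) t) →
      (∀ t ∈ Ioo (0:ℝ) 1, f t ≤ M) →
      (∀ᵐ t ∂(volume.restrict (Ioo (0:ℝ) 1)), f t ≤ C * (t * f' t) ^ α) →
      ∀ t ∈ Ioo (0:ℝ) (min δ 1), f t = 0 := by
  set β := 1 - α⁻¹
  have hβ : 0 < β := sub_pos.2 (inv_lt_one_of_one_lt₀ hα)
  set c := β * C ^ (-α⁻¹)
  have hc : 0 < c := by positivity
  refine ⟨1 / 2 * exp (-(M ^ β / c)), by positivity, ?_⟩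
  intro f f' hf0 hmono hderiv hbdd hineq t ⟨ht0, htδ⟩
  have htδ' : t < 1 / 2 * exp (-(M ^ β / c)) := htδ.trans_le (min_le_left _ _)
  have hM : 0 ≤ M := (hf0 (1 / 2) (by norm_num)).trans (hbdd (1 / 2) (by norm_num))
  have ht_half : t < 1 / 2 := by
    have := exp_le_one_iff.2 (neg_nonpos.2 (div_nonneg (rpow_nonneg hM β) hc.le))
    linarith
  have hIcc : Icc t (1 / 2) ⊆ Ioo 0 1 := fun x hx ↦ ⟨ht0.trans_le hx.1, by linarith [hx.2]⟩
  have htI : t ∈ Ioo (0:ℝ) 1 := hIcc (left_mem_Icc.2 ht_half.le)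
  by_contra hft
  have hpos : ∀ x ∈ Icc t (1 / 2), 0 < f x := fun x hx ↦
    ((hf0 t htI).lt_of_ne' hft).trans_le (hmono htI (hIcc hx) hx.1)
  have hf' : ∀ x ∈ Ioo (0:ℝ) 1, 0 ≤ f' x := fun x hx ↦
    (hderiv x hx).hasDerivWithinAt.nonneg_of_monotoneOn (isOpen_Ioo.preperfect x hx) hmono
  have hlog := mul_log_div_le_rpow_sub_rpow_of_le_mul_rpow hC hα ht0 ht_half.le hpos
    (fun x hx ↦ hderiv x (hIcc hx)) (fun x hx ↦ hf' x (hIcc hx))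
    (ae_restrict_of_ae_restrict_of_subset (Ioc_subset_Icc_self.trans hIcc) hineq)
  have hf_half : f (1 / 2) ^ β ≤ M ^ β :=
    rpow_le_rpow (hpos _ (right_mem_Icc.2 ht_half.le)).le (hbdd _ (by norm_num)) hβ.le
  linarith [lt_mul_log_div_of_lt_mul_exp hc ht0 htδ',
    rpow_nonneg (hpos t (left_mem_Icc.2 ht_half.le)).le β]

/-- ODE-type iteration lemma.  If `f : (0,1) → [0,∞)` is absolutely continuous
(here: differentiable on `(0,1)` with derivative `f'`), nondecreasing, bounded by `M`, and
satisfies `f(t) ≤ C (t f'(t))^α` for a.e. `t ∈ (0,1)` with `C > 0`, `α > 1`, then there is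
`δ > 0`, depending only on `C`, `α` and `M`, such that `f ≡ 0` on `(0, δ)`. -/
theorem vanishing_near_zero_of_differential_inequality
    (C α M : ℝ) (hC : 0 < C) (hα : 1 < α) (hM : 0 < M) :
    ∃ δ > 0, ∀ f f' : ℝ → ℝ,
      (∀ t ∈ Ioo (0:ℝ) 1, 0 ≤ f t) →
      MonotoneOn f (Ioo (0:ℝ) 1) →
      (∀ t ∈ Ioo (0:ℝ) 1, HasDerivAt f (f' t) t) →
      (∀ t ∈ Ioo (0:ℝ) 1, f t ≤ M) →
      (∀ᵐ t ∂(volume.restrict (Ioo (0:ℝ) 1)), f t ≤ C * (t * f' t) ^ α) →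
      ∀ t ∈ Ioo (0:ℝ) (min δ 1), f t = 0 :=
  vanishing_near_zero_of_differential_inequality_general C α M hC hα
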